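/- Consider a prediction mandatory free instance with unique T_L = T_U, its vertex cover instance Ḡ, a minimum vertex cover VC of Ḡ, and a maximum matching h assigning to each e ∈ VC a distinct partner h(e) ∉ VC. Let l'_1,…,l'_k be the edges of VC ∩ T_L ordered by non-increasing upper limit, and let d be such that the true value of each l'_i with i < d is minimal in the cut X_{l'_i}; then {l'_i, h(l'_i)} is a witness set for each i ≤ d. Symmetrically, let f'_1,…,f'_g be the edges of VC ∖ T_L ordered by non-decreasing lower limit, and let b be such that the true value of each f'_i with i < b is maximal on the cycle C_{f'_i}; then {f'_i, h(f'_i)} is a witness set for each i ≤ b. -/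

import Mathlib

/-!
Common framework: the minimum spanning tree problem under explorable
uncertainty with (untrusted) predictions.
-/

open scoped BigOperators
open scoped Classical

noncomputable section

/-- An instance of the MST problem under explorable uncertainty with predictions:
a connected (multi)graph whose edges carry uncertainty intervals (open `(L,U)` for
non-trivial edges, i.e. `L < U`, and the singleton `{L}` for trivial edges, i.e. `L = U`)
together with predicted values `pw e` lying in the intervals. -/
structure UncGraph where
  V : Type
  E : Type
  fintV : Fintype V
  fintE : Fintype E
  decV : DecidableEq V
  decE : DecidableEq E
  ends : E → Sym2 V
  conn : ∀ u v : V, Relation.ReflTransGen (fun a b => ∃ e : E, ends e = s(a, b)) u v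
  L : E → ℝ
  U : E → ℝ
  LU : ∀ e, L e ≤ U e
  pw : E → ℝ
  pw_mem : ∀ e, (L e = U e ∧ pw e = L e) ∨ (L e < pw e ∧ pw e < U e)

attribute [instance] UncGraph.fintV UncGraph.fintE UncGraph.decV UncGraph.decE

namespace UncGraph

variable (G : UncGraph)

/-- The uncertainty interval of an edge: the open interval `(L e, U e)` for a
non-trivial edge, the singleton `{L e}` for a trivial edge (`L e = U e`). -/
def I (e : G.E) : Set ℝ :=
  {x | (G.L e = G.U e ∧ x = G.L e) ∨ (G.L e < x ∧ x < G.U e)}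

/-- A trivial edge: its interval is a singleton. -/
def TrivialEdge (e : G.E) : Prop := G.L e = G.U e

/-- A non-trivial edge: its interval is a nonempty open interval. -/
def NontrivialEdge (e : G.E) : Prop := G.L e < G.U e

/-- `w` is a valid realization of true edge weights. -/
def Valid (w : G.E → ℝ) : Prop := ∀ e, w e ∈ G.I e

/-- Connectivity of two vertices using only edges from `S`. -/
def ConnectsVia (S : Finset G.E) (u v : G.V) : Prop :=
  Relation.ReflTransGen (fun a b => ∃ e ∈ S, G.ends e = s(a, b)) u v

/-- `S` is a spanning tree: it connects all vertices and has `|V| - 1` edges. -/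
def IsSpanningTree (S : Finset G.E) : Prop :=
  (∀ u v : G.V, G.ConnectsVia S u v) ∧ S.card + 1 = Fintype.card G.V

/-- `T` is a minimum spanning tree with respect to the weight function `wf`. -/
def IsMST (wf : G.E → ℝ) (T : Finset G.E) : Prop :=
  G.IsSpanningTree T ∧ ∀ T', G.IsSpanningTree T' → ∑ e ∈ T, wf e ≤ ∑ e ∈ T', wf e

/-- `wf` agrees with the true values `w` on the queried set `Q` and lies in the
uncertainty intervals elsewhere. -/
def Compatible (w : G.E → ℝ) (Q : Finset G.E) (wf : G.E → ℝ) : Prop :=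
  (∀ e ∈ Q, wf e = w e) ∧ ∀ e, wf e ∈ G.I e

/-- The query set `Q` verifies `T`: `T` is an MST for every weight function
compatible with the revealed values. -/
def Verifies (w : G.E → ℝ) (Q T : Finset G.E) : Prop :=
  ∀ wf, G.Compatible w Q wf → G.IsMST wf T

/-- `Q` is a feasible query set for true values `w`. -/
def Feasible (w : G.E → ℝ) (Q : Finset G.E) : Prop :=
  ∃ T, G.Verifies w Q T

/-- The minimum cardinality of a feasible query set. -/
def optCost (w : G.E → ℝ) : ℕ :=
  sInf {n | ∃ Q, G.Feasible w Q ∧ Q.card = n}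

/-- `Q` is an optimal (minimum-cardinality feasible) query set. -/
def IsOptimal (w : G.E → ℝ) (Q : Finset G.E) : Prop :=
  G.Feasible w Q ∧ ∀ Q', G.Feasible w Q' → Q.card ≤ Q'.card

/-- An edge is mandatory if it belongs to every feasible query set. -/
def Mandatory (w : G.E → ℝ) (e : G.E) : Prop :=
  ∀ Q, G.Feasible w Q → e ∈ Q

/-- A witness set intersects every feasible query set. -/
def IsWitnessSet (w : G.E → ℝ) (W : Finset G.E) : Prop :=
  ∀ Q, G.Feasible w Q → ∃ e ∈ W, e ∈ Q

/-- An edge is prediction mandatory if it is mandatory under the assumption that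
all queries return the predicted values. -/
def PredMandatory (e : G.E) : Prop := G.Mandatory G.pw e

/-- An instance is prediction mandatory free if it has no prediction mandatory edge. -/
def PredMandatoryFree : Prop := ∀ e, ¬ G.PredMandatory e

/-- Hop-distance indicator `k_{e'}(e)`: `0` if the prediction `p e` has the same
relation to the interval `I e'` as the true value `w e` (both `≤ L e'`, both
`≥ U e'`, or both strictly inside), and `1` otherwise. -/
def kErr (p w : G.E → ℝ) (e e' : G.E) : ℕ :=
  if (p e ≤ G.L e' ∧ w e ≤ G.L e') ∨ (G.U e' ≤ p e ∧ G.U e' ≤ w e) ∨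
      (G.L e' < p e ∧ p e < G.U e' ∧ G.L e' < w e ∧ w e < G.U e')
  then 0 else 1

/-- `h→(e) = Σ_{e' ≠ e} k_{e'}(e)`. -/
def hright (p w : G.E → ℝ) (e : G.E) : ℕ :=
  ∑ e' ∈ Finset.univ.erase e, G.kErr p w e e'

/-- `h←(e) = Σ_{e' ≠ e} k_e(e')`. -/
def hleft (p w : G.E → ℝ) (e : G.E) : ℕ :=
  ∑ e' ∈ Finset.univ.erase e, G.kErr p w e' e

/-- `h→(E') = Σ_{e ∈ E'} h→(e)`. -/
def hrightSum (p w : G.E → ℝ) (S : Finset G.E) : ℕ := ∑ e ∈ S, G.hright p w e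

/-- `h←(E') = Σ_{e ∈ E'} h←(e)`. -/
def hleftSum (p w : G.E → ℝ) (S : Finset G.E) : ℕ := ∑ e ∈ S, G.hleft p w e

/-- The hop distance of prediction `p` for realization `w`. -/
def hopDist (p w : G.E → ℝ) : ℕ := ∑ e, G.hright p w e

/-- The hop distance `k_h` of the instance's predictions for realization `w`. -/
def khop (w : G.E → ℝ) : ℕ := G.hopDist G.pw w

/-- Lower-limit weights `w^L`: `L e + ε` for non-trivial edges, the known value
for trivial edges. -/
def lowerWeight (ε : ℝ) (e : G.E) : ℝ := if G.L e = G.U e then G.L e else G.L e + ε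

/-- Upper-limit weights `w^U`: `U e - ε` for non-trivial edges, the known value
for trivial edges. -/
def upperWeight (ε : ℝ) (e : G.E) : ℝ := if G.L e = G.U e then G.L e else G.U e - ε

/-- `T` is a lower limit tree: an MST for `w^L` for all sufficiently small `ε > 0`. -/
def IsLowerLimitTree (T : Finset G.E) : Prop :=
  ∃ ε₀ > (0 : ℝ), ∀ ε : ℝ, 0 < ε → ε < ε₀ → G.IsMST (G.lowerWeight ε) T

/-- `T` is an upper limit tree: an MST for `w^U` for all sufficiently small `ε > 0`. -/
def IsUpperLimitTree (T : Finset G.E) : Prop :=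
  ∃ ε₀ > (0 : ℝ), ∀ ε : ℝ, 0 < ε → ε < ε₀ → G.IsMST (G.upperWeight ε) T

/-- `T` is simultaneously the unique lower limit tree and the unique upper
limit tree (`T_L = T_U`, both unique). -/
def UniqueLimitTrees (T : Finset G.E) : Prop :=
  G.IsLowerLimitTree T ∧ G.IsUpperLimitTree T ∧
  (∀ T', G.IsLowerLimitTree T' → T' = T) ∧
  (∀ T', G.IsUpperLimitTree T' → T' = T)

/-- Number of edge-ends of `S` incident to `v` (loops count twice). -/
def incCount (S : Finset G.E) (v : G.V) : ℕ :=
  ∑ e ∈ S, (if G.ends e = s(v, v) then 2 else if v ∈ G.ends e then 1 else 0)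

/-- `S` forms a single cycle: nonempty, every vertex has degree `0` or `2`,
and the support is connected. -/
def IsCycle (S : Finset G.E) : Prop :=
  S.Nonempty ∧ (∀ v, G.incCount S v = 0 ∨ G.incCount S v = 2) ∧
  ∀ u v, G.incCount S u ≠ 0 → G.incCount S v ≠ 0 → G.ConnectsVia S u v

/-- `C` is the cycle closed by adding the edge `f` to the tree `T`. -/
def IsCycleOf (T : Finset G.E) (f : G.E) (C : Finset G.E) : Prop :=
  G.IsCycle C ∧ f ∈ C ∧ C ⊆ insert f T

/-- `e'` lies in the cut `X_e` between the two components of `T \ {e}`. -/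
def InCut (T : Finset G.E) (e e' : G.E) : Prop :=
  ∀ u v : G.V, G.ends e' = s(u, v) → ¬ G.ConnectsVia (T.erase e) u v

/-- `S` is a path between the (distinct) vertices `a` and `b`. -/
def IsPathBetween (S : Finset G.E) (a b : G.V) : Prop :=
  a ≠ b ∧ G.incCount S a = 1 ∧ G.incCount S b = 1 ∧
  (∀ v, v ≠ a → v ≠ b → G.incCount S v = 0 ∨ G.incCount S v = 2) ∧
  ∀ v, G.incCount S v ≠ 0 → G.ConnectsVia S a v

/-- `{f, l}` is an edge of the vertex cover instance `Ḡ` (w.r.t. the tree `T`):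
`f ∉ T`, `l ≠ f` lies on the cycle closed by `f`, both are non-trivial, and
their intervals intersect. -/
def VCEdge (T : Finset G.E) (f l : G.E) : Prop :=
  f ∉ T ∧ l ≠ f ∧ G.NontrivialEdge f ∧ G.NontrivialEdge l ∧
  (∃ C, G.IsCycleOf T f C ∧ l ∈ C) ∧ (G.I f ∩ G.I l).Nonempty

/-- Adjacency in the vertex cover instance `Ḡ` (symmetrized). -/
def VCAdj (T : Finset G.E) (a b : G.E) : Prop := G.VCEdge T a b ∨ G.VCEdge T b a

/-- `S` is a vertex cover of the vertex cover instance `Ḡ`. -/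
def IsVCCover (T S : Finset G.E) : Prop :=
  ∀ a b, G.VCAdj T a b → a ∈ S ∨ b ∈ S

/-- `S` is a minimum vertex cover of the vertex cover instance `Ḡ`. -/
def IsMinVC (T S : Finset G.E) : Prop :=
  G.IsVCCover T S ∧ ∀ S', G.IsVCCover T S' → S.card ≤ S'.card

/-- Edge `e` does not occur in the instance anymore: independently of the
remaining uncertainty it can be deleted (some MST avoids it, for every
realization) or contracted (some MST contains it, for every realization). -/
def Removable (e : G.E) : Prop :=
  (∀ wf : G.E → ℝ, (∀ e', wf e' ∈ G.I e') → ∃ T, G.IsMST wf T ∧ e ∉ T) ∨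
  (∀ wf : G.E → ℝ, (∀ e', wf e' ∈ G.I e') → ∃ T, G.IsMST wf T ∧ e ∈ T)

end UncGraph

/-- The instance obtained from `G` by querying the edges of `Q` under true
values `w`: the intervals of queried edges collapse to the revealed values. -/
def UncGraph.restrict (G : UncGraph) (w : G.E → ℝ) (Q : Finset G.E) : UncGraph where
  V := G.V
  E := G.E
  fintV := G.fintV
  fintE := G.fintE
  decV := G.decV
  decE := G.decE
  ends := G.ends
  conn := G.conn
  L := fun e => if e ∈ Q then w e else G.L e
  U := fun e => if e ∈ Q then w e else G.U e
  LU := fun e => by by_cases h : e ∈ Q <;> simp [h, G.LU e]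
  pw := fun e => if e ∈ Q then w e else G.pw e
  pw_mem := fun e => by
    by_cases h : e ∈ Q
    · simp [h]
    · simpa [h] using G.pw_mem e

/-- A deterministic adaptive query algorithm: given the instance and the set of
already queried edges together with the revealed values, it either picks the next
edge to query or stops (`none`).  The lawfulness condition states that the
decision may only depend on the revealed values of already queried edges. -/
structure Algorithm where
  next : ∀ G : UncGraph, Finset G.E → (G.E → ℝ) → Option G.E
  lawful : ∀ (G : UncGraph) (Q : Finset G.E) (w w' : G.E → ℝ),
    (∀ e ∈ Q, w e = w' e) → next G Q w = next G Q w'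

namespace Algorithm

/-- The set of edges queried by `A` after `n` steps, on instance `G` with true
values `w`; the algorithm stops as soon as the queried set is feasible. -/
def runQueries (A : Algorithm) (G : UncGraph) (w : G.E → ℝ) : ℕ → Finset G.E
  | 0 => ∅
  | n + 1 =>
    let Q := A.runQueries G w n
    if G.Feasible w Q then Q
    else
      match A.next G Q w with
      | some e => insert e Q
      | none => Q

/-- The final query set of the run of `A`. -/
def finalQueries (A : Algorithm) (G : UncGraph) (w : G.E → ℝ) : Finset G.E :=
  A.runQueries G w (Fintype.card G.E + 1)

/-- The number of queries made by `A` on instance `G` with true values `w`. -/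
def algCost (A : Algorithm) (G : UncGraph) (w : G.E → ℝ) : ℕ :=
  (A.finalQueries G w).card

/-- `A` solves every instance: it always ends with a feasible query set. -/
def Solves (A : Algorithm) : Prop :=
  ∀ (G : UncGraph) (w : G.E → ℝ), G.Valid w → G.Feasible w (A.finalQueries G w)

/-- `A` is `α`-consistent: on instances with correct predictions it makes at
most `α · |OPT|` queries. -/
def Consistent (A : Algorithm) (α : ℝ) : Prop :=
  ∀ G : UncGraph, (A.algCost G G.pw : ℝ) ≤ α * (G.optCost G.pw : ℝ)

/-- `A` is `β`-robust: it makes at most `β · |OPT|` queries on every instance. -/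
def Robust (A : Algorithm) (β : ℝ) : Prop :=
  ∀ (G : UncGraph) (w : G.E → ℝ), G.Valid w → (A.algCost G w : ℝ) ≤ β * (G.optCost w : ℝ)

/-- Run of a preprocessing algorithm: it stops exactly when `next` returns
`none` (rather than when the queried set is feasible). -/
def runPre (A : Algorithm) (G : UncGraph) (w : G.E → ℝ) : ℕ → Finset G.E
  | 0 => ∅
  | n + 1 =>
    let Q := A.runPre G w n
    match A.next G Q w with
    | some e => insert e Q
    | none => Q

/-- The final query set of a preprocessing run of `A`. -/
def preQueries (A : Algorithm) (G : UncGraph) (w : G.E → ℝ) : Finset G.E :=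
  A.runPre G w (Fintype.card G.E + 1)

end Algorithm

/-!
Suppose a feasible query set `Q` avoids both edges of a pair `{x, h x}`. Since `x` is unqueried,
one realization compatible with `Q` makes `x` the strict minimum of a fundamental cut of `T`
(so `x` lies in every MST) and another makes it the strict maximum of a cycle (so it lies in
none); then `Q` verifies no tree. Because `T` is both the lower and the upper limit tree, the
only edges that could obstruct these realizations are queried edges `e` whose interval meets
that of `m = h x`. As `m ∉ VC`, such an `e` lies in the vertex cover and comes before `x` in the
order, and the assumption on its true value shows that it does not obstruct after all.
-/

namespace UncGraph

variable {G : UncGraph}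

theorem exists_ends_eq (e : G.E) : ∃ x y, G.ends e = s(x, y) :=
  Sym2.ind (f := fun z => ∃ x y, z = s(x, y)) (fun x y => ⟨x, y, rfl⟩) (G.ends e)

section Connectivity

variable {S S' : Finset G.E} {e g : G.E} {u v x y : G.V}

namespace ConnectsVia

theorem refl (S : Finset G.E) (v : G.V) : G.ConnectsVia S v v := Relation.ReflTransGen.refl

theorem trans (h₁ : G.ConnectsVia S u v) (h₂ : G.ConnectsVia S v x) : G.ConnectsVia S u x :=
  Relation.ReflTransGen.trans h₁ h₂

theorem symm (h : G.ConnectsVia S u v) : G.ConnectsVia S v u := by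
  refine Relation.reflTransGen_swap.mp (Relation.ReflTransGen.mono ?_ _ _ h)
  rintro a b ⟨e, he, hab⟩
  exact ⟨e, he, hab.trans Sym2.eq_swap⟩

theorem mono (hS : S ⊆ S') (h : G.ConnectsVia S u v) : G.ConnectsVia S' u v :=
  Relation.ReflTransGen.mono (fun _ _ ⟨e, he, hab⟩ => ⟨e, hS he, hab⟩) _ _ h

theorem of_mem (he : e ∈ S) (hends : G.ends e = s(u, v)) : G.ConnectsVia S u v :=
  Relation.ReflTransGen.single ⟨e, he, hends⟩

theorem exists_crossing (h : G.ConnectsVia S u v) (A : G.V → Prop) (hu : A u) (hv : ¬ A v) :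
    ∃ e ∈ S, ∃ x y, G.ends e = s(x, y) ∧ A x ∧ ¬ A y := by
  induction h using Relation.ReflTransGen.head_induction_on with
  | refl => exact absurd hu hv
  | @head a c hstep _ ih =>
    obtain ⟨e, he, hends⟩ := hstep
    by_cases hc : A c
    · exact ih hc
    · exact ⟨e, he, a, c, hends, hu, hc⟩

theorem of_insert (h : G.ConnectsVia (insert g S) u v) (hg : G.ends g = s(x, y)) :
    G.ConnectsVia S u v ∨ ((G.ConnectsVia S u x ∨ G.ConnectsVia S u y) ∧
      (G.ConnectsVia S v x ∨ G.ConnectsVia S v y)) := by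
  -- leaving the component of an endpoint of a walk requires crossing `g`
  have reach_end : ∀ {a b}, G.ConnectsVia (insert g S) a b → ¬ G.ConnectsVia S a b →
      G.ConnectsVia S a x ∨ G.ConnectsVia S a y := by
    intro a b hab hnab
    obtain ⟨e, he, p, q, hpq, hap, haq⟩ := hab.exists_crossing _ (refl S a) hnab
    rcases Finset.mem_insert.mp he with rfl | he
    · rcases Sym2.eq_iff.mp (hpq.symm.trans hg) with ⟨rfl, -⟩ | ⟨rfl, -⟩
      exacts [Or.inl hap, Or.inr hap]
    · exact absurd (hap.trans (of_mem he hpq)) haq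
  by_cases huv : G.ConnectsVia S u v
  · exact Or.inl huv
  · exact Or.inr ⟨reach_end h huv, reach_end h.symm fun h' => huv h'.symm⟩

theorem of_insert_of_connectsVia (h : G.ConnectsVia (insert g S) u v) (hg : G.ends g = s(x, y))
    (hxy : G.ConnectsVia S x y) : G.ConnectsVia S u v := by
  rcases h.of_insert hg with h | ⟨hu | hu, hv | hv⟩
  exacts [h, hu.trans hv.symm, hu.trans (hxy.trans hv.symm), hu.trans (hxy.symm.trans hv.symm),
    hu.trans hv.symm]

theorem erase_of_connectsVia_ends (h : G.ConnectsVia S u v) (he : e ∈ S)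
    (hends : G.ends e = s(x, y)) (hxy : G.ConnectsVia (S.erase e) x y) :
    G.ConnectsVia (S.erase e) u v :=
  of_insert_of_connectsVia (by rwa [Finset.insert_erase he]) hends hxy

theorem erase_ends_of_not_erase (h : G.ConnectsVia S u v) (hends : G.ends e = s(x, y))
    (hne : ¬ G.ConnectsVia (S.erase e) u v) :
    (G.ConnectsVia (S.erase e) u x ∧ G.ConnectsVia (S.erase e) v y) ∨
      (G.ConnectsVia (S.erase e) u y ∧ G.ConnectsVia (S.erase e) v x) := by
  have h' : G.ConnectsVia (insert e (S.erase e)) u v := h.mono (Finset.insert_erase_subset e S)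
  rcases h'.of_insert hends with h | ⟨hu | hu, hv | hv⟩
  · exact absurd h hne
  · exact absurd (hu.trans hv.symm) hne
  · exact Or.inl ⟨hu, hv⟩
  · exact Or.inr ⟨hu, hv⟩
  · exact absurd (hu.trans hv.symm) hne

end ConnectsVia

theorem card_le_card_add_one_of_connectsVia (h : ∀ u v, G.ConnectsVia S u v) :
    Fintype.card G.V ≤ S.card + 1 := by
  rcases isEmpty_or_nonempty G.V with hV | hV
  · simp [Fintype.card_eq_zero]
  set H := SimpleGraph.fromEdgeSet (G.ends '' S)
  have hH : H.Connected := by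
    refine (SimpleGraph.connected_iff H).mpr ⟨fun u v => ?_, hV⟩
    refine (SimpleGraph.reachable_iff_reflTransGen _ _).mpr ?_
    refine Relation.ReflTransGen.lift' id ?_ _ _ (h u v)
    rintro a b ⟨e, he, hab⟩
    by_cases hab' : a = b
    · exact hab' ▸ Relation.ReflTransGen.refl
    · exact Relation.ReflTransGen.single
        (SimpleGraph.fromEdgeSet_adj _ |>.mpr ⟨⟨e, he, hab⟩, hab'⟩)
  have hE : Nat.card H.edgeSet ≤ S.card := by
    rw [SimpleGraph.edgeSet_fromEdgeSet, Nat.card_coe_set_eq]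
    calc (G.ends '' S \ Sym2.diagSet).ncard ≤ (G.ends '' S).ncard :=
          Set.ncard_le_ncard Set.sdiff_subset (Set.toFinite _)
      _ ≤ (S : Set G.E).ncard := Set.ncard_image_le (Set.toFinite _)
      _ = S.card := Set.ncard_coe_finset S
  have := hH.card_vert_le_card_edgeSet_add_one
  rw [Nat.card_eq_fintype_card] at this
  omega

end Connectivity

/-- The summand of `incCount`. -/
def incidence (G : UncGraph) (e : G.E) (v : G.V) : ℕ :=
  if G.ends e = s(v, v) then 2 else if v ∈ G.ends e then 1 else 0

def IsMinimalConnector (G : UncGraph) (P : Finset G.E) (x y : G.V) : Prop :=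
  G.ConnectsVia P x y ∧ ∀ g ∈ P, ¬ G.ConnectsVia (P.erase g) x y

section Paths

variable {S P C : Finset G.E} {e f g : G.E} {v x y z : G.V}

theorem incidence_eq (hends : G.ends e = s(x, y)) (v : G.V) :
    G.incidence e v = (if v = x then 1 else 0) + (if v = y then 1 else 0) := by
  unfold incidence
  rw [hends]
  simp only [Sym2.eq_iff, Sym2.mem_iff]
  split_ifs <;> grind

theorem incidence_eq_zero (hv : v ∉ G.ends e) : G.incidence e v = 0 := by
  obtain ⟨x, y, hends⟩ := exists_ends_eq e
  rw [hends, Sym2.mem_iff, not_or] at hv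
  simp [incidence_eq hends, hv.1, hv.2]

theorem incCount_insert (hf : f ∉ S) (v : G.V) :
    G.incCount (insert f S) v = G.incidence f v + G.incCount S v :=
  Finset.sum_insert hf

theorem incCount_erase_add (hf : f ∈ S) (v : G.V) :
    G.incCount (S.erase f) v + G.incidence f v = G.incCount S v :=
  Finset.sum_erase_add S _ hf

theorem sum_incidence (hends : G.ends e = s(x, y)) (K : Finset G.V) :
    ∑ v ∈ K, G.incidence e v = (if x ∈ K then 1 else 0) + (if y ∈ K then 1 else 0) := by
  simp [incidence_eq hends, Finset.sum_add_distrib]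

theorem two_dvd_sum_incCount (K : Finset G.V)
    (hK : ∀ e ∈ S, ∀ x y, G.ends e = s(x, y) → (x ∈ K ↔ y ∈ K)) :
    2 ∣ ∑ v ∈ K, G.incCount S v := by
  simp only [incCount, ← incidence.eq_def]
  rw [Finset.sum_comm]
  refine Finset.dvd_sum fun e he => ?_
  obtain ⟨x, y, hends⟩ := exists_ends_eq e
  rw [sum_incidence hends]
  by_cases hx : x ∈ K
  · simp [hx, (hK e he x y hends).mp hx]
  · simp [hx, mt (hK e he x y hends).mpr hx]

theorem IsCycle.connectsVia_erase (hC : G.IsCycle C) (he : e ∈ C) (hends : G.ends e = s(x, y)) :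
    G.ConnectsVia (C.erase e) x y := by
  by_contra hxy
  -- `K` is closed in `C.erase e`, so both degree sums over `K` below are even, yet `e` has
  -- exactly one end in `K`
  set K := Finset.univ.filter (G.ConnectsVia (C.erase e) x)
  have hxK : x ∈ K := by simpa [K] using ConnectsVia.refl _ x
  have hyK : y ∉ K := by simpa [K] using hxy
  have hK : ∀ g ∈ C.erase e, ∀ u v, G.ends g = s(u, v) → (u ∈ K ↔ v ∈ K) := by
    intro g hg u v huv
    simp only [K, Finset.mem_filter, Finset.mem_univ, true_and]
    exact ⟨fun h => h.trans (.of_mem hg huv), fun h => h.trans (ConnectsVia.of_mem hg huv).symm⟩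
  have hsplit : ∑ v ∈ K, G.incCount C v = ∑ v ∈ K, G.incCount (C.erase e) v + 1 := by
    simp only [← incCount_erase_add he, Finset.sum_add_distrib, sum_incidence hends, hxK, hyK]
    simp
  have hC2 : 2 ∣ ∑ v ∈ K, G.incCount C v :=
    Finset.dvd_sum fun v _ => by rcases hC.2.1 v with h | h <;> simp [h]
  have := two_dvd_sum_incCount K hK
  omega

theorem exists_isMinimalConnector (h : G.ConnectsVia S x y) :
    ∃ P ⊆ S, G.IsMinimalConnector P x y := by
  obtain ⟨P, hP, hmin⟩ := (S.powerset.filter (G.ConnectsVia · x y)).exists_min_image Finset.card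
    ⟨S, by simpa using h⟩
  rw [Finset.mem_filter, Finset.mem_powerset] at hP
  refine ⟨P, hP.1, hP.2, fun g hg hg' => ?_⟩
  have := hmin (P.erase g) (by simp [hg', (Finset.erase_subset g P).trans hP.1])
  exact (Finset.card_erase_lt_of_mem hg).not_ge this

namespace IsMinimalConnector

theorem eq_empty_of_self (hP : G.IsMinimalConnector P y y) : P = ∅ :=
  Finset.eq_empty_of_forall_notMem fun g hg => hP.2 g hg (.refl _ y)

theorem exists_mem_left (hP : G.IsMinimalConnector P x y) (hxy : x ≠ y) :
    ∃ f ∈ P, x ∈ G.ends f := by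
  obtain ⟨c, ⟨f, hf, hends⟩, -⟩ := (Relation.ReflTransGen.cases_head hP.1).resolve_left hxy
  exact ⟨f, hf, hends ▸ Sym2.mem_mk_left x c⟩

theorem erase (hP : G.IsMinimalConnector P x y) (hf : f ∈ P) (hends : G.ends f = s(x, z)) :
    G.IsMinimalConnector (P.erase f) z y := by
  refine ⟨?_, fun g hg hzy => ?_⟩
  · rcases hP.1.erase_ends_of_not_erase hends (hP.2 f hf) with ⟨-, hyz⟩ | ⟨-, hyx⟩
    exacts [hyz.symm, absurd hyx.symm (hP.2 f hf)]
  · obtain ⟨hgf, hgP⟩ := Finset.mem_erase.mp hg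
    refine hP.2 g hgP (ConnectsVia.trans (.of_mem (Finset.mem_erase.mpr ⟨hgf.symm, hf⟩) hends) ?_)
    exact hzy.mono (by rw [Finset.erase_right_comm]; exact Finset.erase_subset _ _)

theorem eq_of_mem_ends (hP : G.IsMinimalConnector P x y) (hf : f ∈ P) (hg : g ∈ P)
    (hxf : x ∈ G.ends f) (hxg : x ∈ G.ends g) : f = g := by
  by_contra hfg
  obtain ⟨t, hft⟩ := Sym2.mem_iff_exists.mp hxf
  obtain ⟨r, hgr⟩ := Sym2.mem_iff_exists.mp hxg
  have hP' := hP.erase hf hft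
  have hgP' : g ∈ P.erase f := Finset.mem_erase.mpr ⟨Ne.symm hfg, hg⟩
  have hsub : (P.erase f).erase g ⊆ P.erase f := Finset.erase_subset _ _
  rcases hP'.1.erase_ends_of_not_erase hgr (hP'.2 g hgP') with ⟨htx, -⟩ | ⟨-, hyx⟩
  · exact hP.2 f hf ((htx.mono hsub).symm.trans hP'.1)
  · exact hP.2 f hf (hyx.mono hsub).symm

theorem incCount_erase_left (hP : G.IsMinimalConnector P x y) (hf : f ∈ P)
    (hxf : x ∈ G.ends f) : G.incCount (P.erase f) x = 0 :=
  Finset.sum_eq_zero fun _ hg => by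
    obtain ⟨hgf, hgP⟩ := Finset.mem_erase.mp hg
    exact incidence_eq_zero fun hxg => hgf (hP.eq_of_mem_ends hf hgP hxf hxg).symm

end IsMinimalConnector

theorem isPathBetween_singleton (hends : G.ends f = s(x, y)) (hxy : x ≠ y) :
    G.IsPathBetween {f} x y := by
  have hdeg : ∀ v, G.incCount {f} v = (if v = x then 1 else 0) + (if v = y then 1 else 0) := by
    intro v; simp [incCount, ← incidence.eq_def, incidence_eq hends]
  refine ⟨hxy, by simp [hdeg, hxy], by simp [hdeg, hxy.symm], fun v hvx hvy => ?_, fun v hv => ?_⟩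
  · simp [hdeg, hvx, hvy]
  · rcases eq_or_ne v x with rfl | hvx
    · exact .refl _ _
    · rcases eq_or_ne v y with rfl | hvy
      · exact .of_mem (Finset.mem_singleton_self f) hends
      · simp [hdeg, hvx, hvy] at hv

theorem IsPathBetween.cons (hP : G.IsPathBetween P z y) (hf : f ∉ P)
    (hends : G.ends f = s(x, z)) (hx : G.incCount P x = 0) :
    G.IsPathBetween (insert f P) x y := by
  obtain ⟨hzy, hz, hy, hmid, hconn⟩ := hP
  have hxz : x ≠ z := by rintro rfl; omega
  have hxy : x ≠ y := by rintro rfl; omega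
  have hdeg : ∀ v, G.incCount (insert f P) v =
      (if v = x then 1 else 0) + (if v = z then 1 else 0) + G.incCount P v := by
    intro v; rw [incCount_insert hf, incidence_eq hends]
  refine ⟨hxy, by simp [hdeg, hxz, hx], by simp [hdeg, hxy.symm, hzy.symm, hy],
    fun v hvx hvy => ?_, fun v hv => ?_⟩
  · rcases eq_or_ne v z with rfl | hvz
    · simp [hdeg, hvx, hz]
    · simpa [hdeg, hvx, hvz] using hmid v hvz hvy
  · have hxz' : G.ConnectsVia (insert f P) x z := .of_mem (Finset.mem_insert_self f P) hends
    rcases eq_or_ne v x with rfl | hvx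
    · exact .refl _ _
    rcases eq_or_ne v z with rfl | hvz
    · exact hxz'
    · have hv' : G.incCount P v ≠ 0 := by simpa [hdeg, hvx, hvz] using hv
      exact hxz'.trans ((hconn v hv').mono (Finset.subset_insert f P))

theorem IsMinimalConnector.isPathBetween (hP : G.IsMinimalConnector P x y) (hxy : x ≠ y) :
    G.IsPathBetween P x y := by
  induction P using Finset.strongInduction generalizing x with
  | H P ih =>
    obtain ⟨f, hf, hxf⟩ := hP.exists_mem_left hxy
    obtain ⟨z, hfz⟩ := Sym2.mem_iff_exists.mp hxf
    have hP' := hP.erase hf hfz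
    rcases eq_or_ne z y with rfl | hzy
    · rw [← Finset.insert_erase hf, hP'.eq_empty_of_self]
      exact isPathBetween_singleton hfz hxy
    · rw [← Finset.insert_erase hf]
      exact (ih _ (Finset.erase_ssubset hf) hP' hzy).cons (Finset.notMem_erase f P) hfz
        (hP.incCount_erase_left hf hxf)

theorem IsPathBetween.isCycle_insert (hP : G.IsPathBetween P x y) (hg : g ∉ P)
    (hends : G.ends g = s(x, y)) : G.IsCycle (insert g P) := by
  obtain ⟨hxy, hx, hy, hmid, hconn⟩ := hP
  have hdeg : ∀ v, G.incCount (insert g P) v =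
      (if v = x then 1 else 0) + (if v = y then 1 else 0) + G.incCount P v := by
    intro v; rw [incCount_insert hg, incidence_eq hends]
  have hsupp : ∀ v, G.incCount (insert g P) v ≠ 0 → G.ConnectsVia (insert g P) x v := by
    intro v hv
    refine (hconn v ?_).mono (Finset.subset_insert g P)
    rcases eq_or_ne v x with rfl | hvx
    · omega
    rcases eq_or_ne v y with rfl | hvy
    · omega
    · simpa [hdeg, hvx, hvy] using hv
  refine ⟨Finset.insert_nonempty g P, fun v => ?_,
    fun u v hu hv => (hsupp u hu).symm.trans (hsupp v hv)⟩
  rcases eq_or_ne v x with rfl | hvx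
  · simp [hdeg, hxy, hx]
  rcases eq_or_ne v y with rfl | hvy
  · simp [hdeg, hvx, hy]
  · simpa [hdeg, hvx, hvy] using hmid v hvx hvy

end Paths

section SpanningTrees

variable {C T T' : Finset G.E} {e f g m x : G.E} {a b c d : G.V}

theorem InCut.notMem (h : G.InCut T e f) (hfe : f ≠ e) : f ∉ T := fun hfT => by
  obtain ⟨a, b, hab⟩ := exists_ends_eq f
  exact h a b hab (.of_mem (Finset.mem_erase.mpr ⟨hfe, hfT⟩) hab)

theorem inCut_of_crossing (hg : G.ends g = s(c, d)) (hc : G.ConnectsVia (T.erase e) a c)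
    (hd : ¬ G.ConnectsVia (T.erase e) a d) : G.InCut T e g := by
  intro u v huv h
  rcases Sym2.eq_iff.mp (huv.symm.trans hg) with ⟨rfl, rfl⟩ | ⟨rfl, rfl⟩
  exacts [hd (hc.trans h), hd (hc.trans h.symm)]

namespace IsSpanningTree

theorem not_connectsVia_erase (hT : G.IsSpanningTree T) (he : e ∈ T) (hends : G.ends e = s(a, b)) :
    ¬ G.ConnectsVia (T.erase e) a b := fun hab => by
  have := card_le_card_add_one_of_connectsVia fun u v =>
    (hT.1 u v).erase_of_connectsVia_ends he hends hab
  have := Finset.card_erase_add_one he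
  have := hT.2
  omega

theorem inCut_self (hT : G.IsSpanningTree T) (he : e ∈ T) : G.InCut T e e :=
  fun _ _ hends => hT.not_connectsVia_erase he hends

theorem exchange (hT : G.IsSpanningTree T) (he : e ∈ T) (hf : f ∉ T) (hends : G.ends f = s(c, d))
    (hcd : ¬ G.ConnectsVia (T.erase e) c d) : G.IsSpanningTree (insert f (T.erase e)) := by
  obtain ⟨a, b, hab⟩ := exists_ends_eq e
  have hsub : T.erase e ⊆ insert f (T.erase e) := Finset.subset_insert f _
  have hf' : G.ConnectsVia (insert f (T.erase e)) c d := .of_mem (Finset.mem_insert_self f _) hends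
  have hab' : G.ConnectsVia (insert f (T.erase e)) a b := by
    rcases (hT.1 c d).erase_ends_of_not_erase hab hcd with ⟨hca, hdb⟩ | ⟨hcb, hda⟩
    · exact (hca.mono hsub).symm.trans (hf'.trans (hdb.mono hsub))
    · exact (hda.mono hsub).symm.trans (hf'.symm.trans (hcb.mono hsub))
  refine ⟨fun u v => ((hT.1 u v).mono ?_).of_insert_of_connectsVia hab hab', ?_⟩
  · exact (Finset.insert_erase_subset e T).trans (Finset.insert_subset_insert e hsub)
  · rw [Finset.card_insert_of_notMem fun h => hf (Finset.mem_of_mem_erase h),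
      Finset.card_erase_add_one he]
    exact hT.2

theorem exists_isCycleOf (hT : G.IsSpanningTree T) (hg : g ∉ T)
    (hcut : G.InCut T m g) : ∃ C, G.IsCycleOf T g C ∧ m ∈ C := by
  obtain ⟨a, b, hab⟩ := exists_ends_eq g
  have hne : a ≠ b := fun h => hcut a b hab (h ▸ .refl _ a)
  obtain ⟨P, hPT, hP⟩ := exists_isMinimalConnector (hT.1 a b)
  have hmP : m ∈ P := by
    by_contra hmP
    exact hcut a b hab (hP.1.mono fun e he =>
      Finset.mem_erase.mpr ⟨fun h => hmP (h ▸ he), hPT he⟩)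
  exact ⟨insert g P, ⟨(hP.isPathBetween hne).isCycle_insert (fun h => hg (hPT h)) hab,
    Finset.mem_insert_self g P, Finset.insert_subset_insert g hPT⟩, Finset.mem_insert_of_mem hmP⟩

end IsSpanningTree

theorem IsCycleOf.mem_of_ne (hC : G.IsCycleOf T g C) (he : e ∈ C) (heg : e ≠ g) : e ∈ T :=
  (Finset.mem_insert.mp (hC.2.2 he)).resolve_left heg

theorem IsCycleOf.inCut (hT : G.IsSpanningTree T) (hC : G.IsCycleOf T g C) (he : e ∈ C)
    (heg : e ≠ g) : G.InCut T e g := by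
  intro u v huv huv'
  obtain ⟨a, b, hab⟩ := exists_ends_eq e
  refine hT.not_connectsVia_erase (hC.mem_of_ne he heg) hab ?_
  refine ((hC.1.connectsVia_erase he hab).mono fun h hh => ?_).of_insert_of_connectsVia huv huv'
  obtain ⟨hhe, hhC⟩ := Finset.mem_erase.mp hh
  rcases Finset.mem_insert.mp (hC.2.2 hhC) with rfl | hhT
  exacts [Finset.mem_insert_self _ _, Finset.mem_insert_of_mem (Finset.mem_erase.mpr ⟨hhe, hhT⟩)]

theorem sum_insert_erase (wf : G.E → ℝ) (he : e ∈ T) (hf : f ∉ T) :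
    ∑ x ∈ insert f (T.erase e), wf x = ∑ x ∈ T, wf x + wf f - wf e := by
  rw [Finset.sum_insert fun h => hf (Finset.mem_of_mem_erase h), Finset.sum_erase_eq_sub he]
  ring

namespace IsMST

variable {wf : G.E → ℝ}

theorem le_of_inCut (hT : G.IsMST wf T) (he : e ∈ T) (hf : G.InCut T e f) (hfe : f ≠ e) :
    wf e ≤ wf f := by
  obtain ⟨c, d, hcd⟩ := exists_ends_eq f
  have := hT.2 _ (hT.1.exchange he (hf.notMem hfe) hcd (hf c d hcd))
  rw [sum_insert_erase wf he (hf.notMem hfe)] at this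
  linarith

theorem mem_of_lt_of_inCut (hT' : G.IsMST wf T') (hx : G.InCut T e x)
    (hlt : ∀ g, G.InCut T e g → g ≠ x → wf x < wf g) : x ∈ T' := by
  by_contra hxT'
  obtain ⟨a, b, hab⟩ := exists_ends_eq x
  obtain ⟨P, hPT', hP⟩ := exists_isMinimalConnector (hT'.1.1 a b)
  obtain ⟨g, hgP, c, d, hcd, hac, had⟩ :=
    hP.1.exists_crossing (G.ConnectsVia (T.erase e) a) (.refl _ a) (hx a b hab)
  have hgx : g ≠ x := fun h => hxT' (h ▸ hPT' hgP)
  -- `g` lies on the tree path of `T'` between the ends of `x`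
  have hsep : ¬ G.ConnectsVia (T'.erase g) a b := fun hab' => by
    refine hT'.1.not_connectsVia_erase (hPT' hgP) hcd ?_
    have hsub : P.erase g ⊆ T'.erase g := Finset.erase_subset_erase g hPT'
    rcases hP.1.erase_ends_of_not_erase hcd (hP.2 g hgP) with ⟨hac', hbd⟩ | ⟨had', hbc⟩
    · exact (hac'.mono hsub).symm.trans (hab'.trans (hbd.mono hsub))
    · exact (hbc.mono hsub).symm.trans (hab'.symm.trans (had'.mono hsub))
  have := hT'.2 _ (hT'.1.exchange (hPT' hgP) hxT' hab hsep)
  rw [sum_insert_erase wf (hPT' hgP) hxT'] at this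
  linarith [hlt g (inCut_of_crossing hcd hac had) hgx]

theorem notMem_of_lt_of_isCycle (hT' : G.IsMST wf T') (hC : G.IsCycle C) (hx : x ∈ C)
    (hlt : ∀ e ∈ C, e ≠ x → wf e < wf x) : x ∉ T' := fun hxT' => by
  obtain ⟨a, b, hab⟩ := exists_ends_eq x
  obtain ⟨e, heC, c, d, hcd, hac, had⟩ := (hC.connectsVia_erase hx hab).exists_crossing
    (G.ConnectsVia (T'.erase x) a) (.refl _ a) (hT'.1.not_connectsVia_erase hxT' hab)
  obtain ⟨hex, heC⟩ := Finset.mem_erase.mp heC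
  have heT' : e ∉ T' := fun h => had (hac.trans (.of_mem (Finset.mem_erase.mpr ⟨hex, h⟩) hcd))
  have := hT'.2 _ (hT'.1.exchange hxT' heT' hcd fun h => had (hac.trans h))
  rw [sum_insert_erase wf hxT' heT'] at this
  linarith [hlt e heC hex]

end IsMST

end SpanningTrees

section LimitTrees

open Filter Topology

variable {T : Finset G.E} {e f : G.E} {y : ℝ}

theorem le_of_eventually_le_add {a b : ℝ} (h : ∀ᶠ ε in 𝓝[>] (0 : ℝ), a ≤ b + ε) : a ≤ b :=
  ge_of_tendsto (tendsto_nhdsWithin_of_tendsto_nhds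
    ((continuous_const_add b).tendsto' 0 b (add_zero b))) h

theorem IsLowerLimitTree.isSpanningTree (hT : G.IsLowerLimitTree T) : G.IsSpanningTree T := by
  obtain ⟨ε₀, hε₀, h⟩ := hT
  exact (h (ε₀ / 2) (by linarith) (by linarith)).1

namespace IsLowerLimitTree

theorem eventually_lowerWeight_le (hT : G.IsLowerLimitTree T) (he : e ∈ T) (hf : G.InCut T e f)
    (hfe : f ≠ e) : ∀ᶠ ε in 𝓝[>] (0 : ℝ), G.lowerWeight ε e ≤ G.lowerWeight ε f := by
  obtain ⟨ε₀, hε₀, h⟩ := hT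
  filter_upwards [Ioo_mem_nhdsGT hε₀] with ε hε using (h ε hε.1 hε.2).le_of_inCut he hf hfe

theorem L_le (hT : G.IsLowerLimitTree T) (he : e ∈ T) (hf : G.InCut T e f) (hfe : f ≠ e) :
    G.L e ≤ G.L f := by
  refine le_of_eventually_le_add ?_
  filter_upwards [hT.eventually_lowerWeight_le he hf hfe, self_mem_nhdsWithin] with ε hε hε0
  have : (0 : ℝ) < ε := hε0
  unfold lowerWeight at hε
  split_ifs at hε <;> linarith

theorem L_lt_of_mem_I (hT : G.IsLowerLimitTree T) (he : e ∈ T) (hf : G.InCut T e f)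
    (hfe : f ≠ e) (hnt : G.NontrivialEdge e) (hy : y ∈ G.I f) : G.L e < y := by
  rcases hy with ⟨htriv, rfl⟩ | ⟨hLy, -⟩
  · obtain ⟨ε, hε, hε0⟩ :=
      ((hT.eventually_lowerWeight_le he hf hfe).and self_mem_nhdsWithin).exists
    have : (0 : ℝ) < ε := hε0
    unfold lowerWeight at hε
    rw [if_neg hnt.ne, if_pos htriv] at hε
    linarith
  · exact (hT.L_le he hf hfe).trans_lt hLy

end IsLowerLimitTree

namespace IsUpperLimitTree

theorem eventually_upperWeight_le (hT : G.IsUpperLimitTree T) (he : e ∈ T) (hf : G.InCut T e f)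
    (hfe : f ≠ e) : ∀ᶠ ε in 𝓝[>] (0 : ℝ), G.upperWeight ε e ≤ G.upperWeight ε f := by
  obtain ⟨ε₀, hε₀, h⟩ := hT
  filter_upwards [Ioo_mem_nhdsGT hε₀] with ε hε using (h ε hε.1 hε.2).le_of_inCut he hf hfe

theorem U_le (hT : G.IsUpperLimitTree T) (he : e ∈ T) (hf : G.InCut T e f) (hfe : f ≠ e)
    (hnt : G.NontrivialEdge e) : G.U e ≤ G.U f := by
  refine le_of_eventually_le_add ?_
  filter_upwards [hT.eventually_upperWeight_le he hf hfe, self_mem_nhdsWithin] with ε hε hε0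
  have : (0 : ℝ) < ε := hε0
  unfold upperWeight at hε
  rw [if_neg hnt.ne] at hε
  split_ifs at hε <;> linarith

theorem lt_U_of_mem_I (hT : G.IsUpperLimitTree T) (he : e ∈ T) (hf : G.InCut T e f)
    (hfe : f ≠ e) (hnt : G.NontrivialEdge f) (hy : y ∈ G.I e) : y < G.U f := by
  rcases hy with ⟨htriv, rfl⟩ | ⟨hLy, hyU⟩
  · obtain ⟨ε, hε, hε0⟩ :=
      ((hT.eventually_upperWeight_le he hf hfe).and self_mem_nhdsWithin).exists
    have : (0 : ℝ) < ε := hε0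
    unfold upperWeight at hε
    rw [if_pos htriv, if_neg hnt.ne] at hε
    linarith
  · exact hyU.trans_le (hT.U_le he hf hfe (hLy.trans hyU))

end IsUpperLimitTree

end LimitTrees

section Realizations

open Filter Topology

variable {Q : Finset G.E} {e x : G.E} {w : G.E → ℝ}

theorem exists_mem_I_gt {a : ℝ} (h : a < G.U e) : ∃ y ∈ G.I e, a < y := by
  by_cases ht : G.L e = G.U e
  · exact ⟨G.L e, Or.inl ⟨ht, rfl⟩, ht ▸ h⟩
  · have hLU := lt_of_le_of_ne (G.LU e) ht
    refine ⟨(max a (G.L e) + G.U e) / 2, Or.inr ⟨?_, ?_⟩, ?_⟩ <;>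
      linarith [le_max_left a (G.L e), le_max_right a (G.L e), max_lt h hLU]

theorem exists_mem_I_lt {a : ℝ} (h : G.L e < a) : ∃ y ∈ G.I e, y < a := by
  by_cases ht : G.L e = G.U e
  · exact ⟨G.L e, Or.inl ⟨ht, rfl⟩, h⟩
  · have hLU := lt_of_le_of_ne (G.LU e) ht
    refine ⟨(G.L e + min a (G.U e)) / 2, Or.inr ⟨?_, ?_⟩, ?_⟩ <;>
      linarith [min_le_left a (G.U e), min_le_right a (G.U e), lt_min h hLU]

/-- `y ∈ G.I e ∧ (e ∈ Q → y = w e)` says that `y` is a value of `e` still possible after the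
queries `Q`. -/
theorem exists_compatible_lt (hw : G.Valid w) (hxQ : x ∉ Q) (hx : G.NontrivialEdge x)
    (p : G.E → Prop) (hp : ∀ e, p e → e ≠ x → ∃ y ∈ G.I e, (e ∈ Q → y = w e) ∧ G.L x < y) :
    ∃ wf, G.Compatible w Q wf ∧ ∀ e, p e → e ≠ x → wf x < wf e := by
  have hy : ∀ e, ∃ y ∈ G.I e, (e ∈ Q → y = w e) ∧ (p e → e ≠ x → G.L x < y) := by
    intro e
    by_cases he : p e ∧ e ≠ x
    · obtain ⟨y, hy, hyQ, hlt⟩ := hp e he.1 he.2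
      exact ⟨y, hy, hyQ, fun _ _ => hlt⟩
    · exact ⟨w e, hw e, fun _ => rfl, fun h1 h2 => absurd ⟨h1, h2⟩ he⟩
  choose! y hyI hyQ hlt using hy
  have hv : ∀ᶠ v in 𝓝[>] G.L x, v < G.U x ∧ ∀ e, p e → e ≠ x → v < y e := by
    refine ((eventually_lt_nhds hx).filter_mono nhdsWithin_le_nhds).and
      (eventually_all.mpr fun e => ?_)
    by_cases he : p e ∧ e ≠ x
    · exact ((eventually_lt_nhds (hlt e he.1 he.2)).filter_mono nhdsWithin_le_nhds).mono
        fun _ hv _ _ => hv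
    · exact .of_forall fun _ h1 h2 => absurd ⟨h1, h2⟩ he
  obtain ⟨v, ⟨hvU, hvy⟩, hLv⟩ := (hv.and self_mem_nhdsWithin).exists
  refine ⟨Function.update y x v, ⟨fun e he => ?_, fun e => ?_⟩, fun e he hex => ?_⟩
  · rw [Function.update_of_ne (ne_of_mem_of_not_mem he hxQ)]
    exact hyQ e he
  · rcases eq_or_ne e x with rfl | hex
    · rw [Function.update_self]
      exact Or.inr ⟨hLv, hvU⟩
    · rw [Function.update_of_ne hex]
      exact hyI e
  · rw [Function.update_self, Function.update_of_ne hex]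
    exact hvy e he hex

theorem exists_compatible_gt (hw : G.Valid w) (hxQ : x ∉ Q) (hx : G.NontrivialEdge x)
    (p : G.E → Prop) (hp : ∀ e, p e → e ≠ x → ∃ y ∈ G.I e, (e ∈ Q → y = w e) ∧ y < G.U x) :
    ∃ wf, G.Compatible w Q wf ∧ ∀ e, p e → e ≠ x → wf e < wf x := by
  have hy : ∀ e, ∃ y ∈ G.I e, (e ∈ Q → y = w e) ∧ (p e → e ≠ x → y < G.U x) := by
    intro e
    by_cases he : p e ∧ e ≠ x
    · obtain ⟨y, hy, hyQ, hlt⟩ := hp e he.1 he.2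
      exact ⟨y, hy, hyQ, fun _ _ => hlt⟩
    · exact ⟨w e, hw e, fun _ => rfl, fun h1 h2 => absurd ⟨h1, h2⟩ he⟩
  choose! y hyI hyQ hlt using hy
  have hv : ∀ᶠ v in 𝓝[<] G.U x, G.L x < v ∧ ∀ e, p e → e ≠ x → y e < v := by
    refine ((eventually_gt_nhds hx).filter_mono nhdsWithin_le_nhds).and
      (eventually_all.mpr fun e => ?_)
    by_cases he : p e ∧ e ≠ x
    · exact ((eventually_gt_nhds (hlt e he.1 he.2)).filter_mono nhdsWithin_le_nhds).mono
        fun _ hv _ _ => hv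
    · exact .of_forall fun _ h1 h2 => absurd ⟨h1, h2⟩ he
  obtain ⟨v, ⟨hLv, hvy⟩, hvU⟩ := (hv.and self_mem_nhdsWithin).exists
  refine ⟨Function.update y x v, ⟨fun e he => ?_, fun e => ?_⟩, fun e he hex => ?_⟩
  · rw [Function.update_of_ne (ne_of_mem_of_not_mem he hxQ)]
    exact hyQ e he
  · rcases eq_or_ne e x with rfl | hex
    · rw [Function.update_self]
      exact Or.inr ⟨hLv, hvU⟩
    · rw [Function.update_of_ne hex]
      exact hyI e
  · rw [Function.update_self, Function.update_of_ne hex]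
    exact hvy e he hex

end Realizations

section WitnessSets

variable {T VC : Finset G.E} {a b f l m : G.E} {w : G.E → ℝ}

theorem VCEdge.right_mem (h : G.VCEdge T f l) : l ∈ T := by
  obtain ⟨-, hlf, -, -, ⟨C, hC, hlC⟩, -⟩ := h
  exact hC.mem_of_ne hlC hlf

theorem VCAdj.vcEdge_of_mem (h : G.VCAdj T a b) (ha : a ∈ T) : G.VCEdge T b a :=
  h.resolve_left fun h' => h'.1 ha

theorem VCAdj.vcEdge_of_notMem (h : G.VCAdj T a b) (ha : a ∉ T) : G.VCEdge T a b :=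
  h.resolve_right fun h' => ha h'.right_mem

/-- If neither `l` nor `m` is queried, `l` can still be made the strict minimum of its cut and
the strict maximum of the fundamental cycle of `m`. -/
theorem isWitnessSet_pair_of_mem (hw : G.Valid w) (hT : G.UniqueLimitTrees T)
    (hcov : G.IsVCCover T VC) (hml : G.VCEdge T m l) (hmVC : m ∉ VC)
    (hyp : ∀ e ∈ VC, e ∈ T → G.U l < G.U e → ∀ e', G.InCut T e e' → e' ≠ e → w e ≤ G.L e') :
    G.IsWitnessSet w {l, m} := by
  rintro Q ⟨T', hT'⟩
  by_contra! hQ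
  have hlQ : l ∉ Q := hQ l (by simp)
  have hmQ : m ∉ Q := hQ m (by simp)
  have hlT : l ∈ T := hml.right_mem
  obtain ⟨hmT, hlm, hmnt, hlnt, ⟨C, hC, hlC⟩, x₀, hx₀m, hx₀l⟩ := hml
  have hsp := hT.1.isSpanningTree
  obtain ⟨hLm, -⟩ := hx₀m.resolve_left fun h => hmnt.ne h.1
  obtain ⟨-, hUl⟩ := hx₀l.resolve_left fun h => hlnt.ne h.1
  have hcycle : ∀ e ∈ C, e ≠ l → ∃ y ∈ G.I e, (e ∈ Q → y = w e) ∧ y < G.U l := by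
    intro e heC hel
    rcases eq_or_ne e m with rfl | hem
    · exact ⟨x₀, hx₀m, fun h => absurd h hmQ, hUl⟩
    have heT := hC.mem_of_ne heC hem
    have hcut := hC.inCut hsp heC hem
    have hLe : G.L e ≤ G.L m := hT.1.L_le heT hcut (Ne.symm hem)
    by_cases heQ : e ∈ Q
    · refine ⟨w e, hw e, fun _ => rfl, ?_⟩
      by_contra! hUw
      rcases hw e with ⟨-, hwe⟩ | ⟨hLw, hwU⟩
      · linarith
      -- the intervals of `e` and `m` overlap, so the cover contains the tree edge `e`
      have heVC : e ∈ VC := (hcov m e (Or.inl ⟨hmT, hem, hmnt, hLw.trans hwU, ⟨C, hC, heC⟩,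
        x₀, hx₀m, Or.inr ⟨by linarith, by linarith⟩⟩)).resolve_left hmVC
      linarith [hyp e heVC heT (by linarith) m hcut (Ne.symm hem)]
    · obtain ⟨y, hy, hylt⟩ := exists_mem_I_lt (e := e) (a := G.U l) (by linarith)
      exact ⟨y, hy, fun h => absurd h heQ, hylt⟩
  obtain ⟨wf₁, hwf₁, hlt₁⟩ := exists_compatible_lt hw hlQ hlnt (G.InCut T l) fun e he hel =>
    ⟨w e, hw e, fun _ => rfl, hT.1.L_lt_of_mem_I hlT he hel hlnt (hw e)⟩
  obtain ⟨wf₂, hwf₂, hlt₂⟩ := exists_compatible_gt hw hlQ hlnt (· ∈ C) hcycle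
  exact (hT' wf₂ hwf₂).notMem_of_lt_of_isCycle hC.1 hlC hlt₂
    ((hT' wf₁ hwf₁).mem_of_lt_of_inCut (hsp.inCut_self hlT) hlt₁)

/-- If neither `f` nor `m` is queried, `f` can still be made the strict maximum of its
fundamental cycle and the strict minimum of the cut of `m`. -/
theorem isWitnessSet_pair_of_notMem (hw : G.Valid w) (hT : G.UniqueLimitTrees T)
    (hcov : G.IsVCCover T VC) (hfm : G.VCEdge T f m) (hmVC : m ∉ VC)
    (hyp : ∀ e ∈ VC, e ∉ T → G.L e < G.L f →
      ∀ C, G.IsCycleOf T e C → ∀ e' ∈ C, e' ≠ e → G.U e' ≤ w e) :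
    G.IsWitnessSet w {f, m} := by
  rintro Q ⟨T', hT'⟩
  by_contra! hQ
  have hfQ : f ∉ Q := hQ f (by simp)
  have hmQ : m ∉ Q := hQ m (by simp)
  have hmT : m ∈ T := hfm.right_mem
  obtain ⟨hfT, hmf, hfnt, hmnt, ⟨C, hC, hmC⟩, x₀, hx₀f, hx₀m⟩ := hfm
  have hsp := hT.1.isSpanningTree
  obtain ⟨hLf, -⟩ := hx₀f.resolve_left fun h => hfnt.ne h.1
  obtain ⟨-, hUm⟩ := hx₀m.resolve_left fun h => hmnt.ne h.1
  have hcut : ∀ e, G.InCut T m e → e ≠ f → ∃ y ∈ G.I e, (e ∈ Q → y = w e) ∧ G.L f < y := by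
    intro e he hef
    rcases eq_or_ne e m with rfl | hem
    · exact ⟨x₀, hx₀m, fun h => absurd h hmQ, hLf⟩
    have heT := he.notMem hem
    have hUe : G.U m ≤ G.U e := hT.2.1.U_le hmT he hem hmnt
    by_cases heQ : e ∈ Q
    · refine ⟨w e, hw e, fun _ => rfl, ?_⟩
      by_contra! hwL
      rcases hw e with ⟨htriv, hwe⟩ | ⟨hLw, hwU⟩
      · linarith
      have hLe : G.L m ≤ G.L e := hT.1.L_le hmT he hem
      obtain ⟨C', hC', hmC'⟩ := hsp.exists_isCycleOf heT he
      -- the intervals of `e` and `m` overlap, so the cover contains the non-tree edge `e`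
      have heVC : e ∈ VC := (hcov e m (Or.inl ⟨heT, Ne.symm hem, hLw.trans hwU, hmnt,
        ⟨C', hC', hmC'⟩, x₀, Or.inr ⟨by linarith, by linarith⟩, hx₀m⟩)).resolve_right hmVC
      linarith [hyp e heVC heT (by linarith) C' hC' m hmC' (Ne.symm hem)]
    · obtain ⟨y, hy, hly⟩ := exists_mem_I_gt (e := e) (a := G.L f) (by linarith)
      exact ⟨y, hy, fun h => absurd h heQ, hly⟩
  obtain ⟨wf₁, hwf₁, hlt₁⟩ := exists_compatible_gt hw hfQ hfnt (· ∈ C) fun e heC hef =>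
    ⟨w e, hw e, fun _ => rfl,
      hT.2.1.lt_U_of_mem_I (hC.mem_of_ne heC hef) (hC.inCut hsp heC hef) (Ne.symm hef) hfnt (hw e)⟩
  obtain ⟨wf₂, hwf₂, hlt₂⟩ := exists_compatible_lt hw hfQ hfnt (G.InCut T m) hcut
  exact (hT' wf₁ hwf₁).notMem_of_lt_of_isCycle hC.1 hC.2.1 hlt₁
    ((hT' wf₂ hwf₂).mem_of_lt_of_inCut (hC.inCut hsp hmC hmf) hlt₂)

end WitnessSets

end UncGraph

theorem vc_matching_witness_sets_general
    (G : UncGraph) (w : G.E → ℝ) (hw : G.Valid w)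
    (T : Finset G.E) (hT : G.UniqueLimitTrees T)
    (VC : Finset G.E) (hVC : G.IsMinVC T VC)
    (h : G.E → G.E)
    (hmatch : ∀ e ∈ VC, G.VCAdj T e (h e) ∧ h e ∉ VC) :
    (∀ (k : ℕ) (l' : Fin k → G.E), Function.Injective l' →
      (∀ i, l' i ∈ VC ∩ T) → (∀ e ∈ VC ∩ T, ∃ i, l' i = e) →
      (∀ i j : Fin k, i ≤ j → G.U (l' j) ≤ G.U (l' i)) →
      ∀ d : ℕ,
        (∀ i : Fin k, (i : ℕ) < d →
          ∀ e', G.InCut T (l' i) e' → e' ≠ l' i → w (l' i) ≤ G.L e') →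
        ∀ i : Fin k, (i : ℕ) ≤ d → G.IsWitnessSet w {l' i, h (l' i)}) ∧
    (∀ (g : ℕ) (f' : Fin g → G.E), Function.Injective f' →
      (∀ i, f' i ∈ VC \ T) → (∀ e ∈ VC \ T, ∃ i, f' i = e) →
      (∀ i j : Fin g, i ≤ j → G.L (f' i) ≤ G.L (f' j)) →
      ∀ b : ℕ,
        (∀ i : Fin g, (i : ℕ) < b →
          ∀ C, G.IsCycleOf T (f' i) C → ∀ e ∈ C, e ≠ f' i → G.U e ≤ w (f' i)) →
        ∀ i : Fin g, (i : ℕ) ≤ b → G.IsWitnessSet w {f' i, h (f' i)}) := by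
  refine ⟨fun k l' _ hmem hsurj hord d hd i hid => ?_, fun g f' _ hmem hsurj hord b hb i hib => ?_⟩
  · obtain ⟨hVCi, hTi⟩ := Finset.mem_inter.mp (hmem i)
    refine G.isWitnessSet_pair_of_mem hw hT hVC.1 ((hmatch _ hVCi).1.vcEdge_of_mem hTi)
      (hmatch _ hVCi).2 fun e heVC heT hlt => ?_
    obtain ⟨j, rfl⟩ := hsurj e (Finset.mem_inter.mpr ⟨heVC, heT⟩)
    have hji : j < i := Antitone.reflect_lt (f := G.U ∘ l') (fun a b hab => hord a b hab) hlt
    exact hd j (by omega)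
  · obtain ⟨hVCi, hTi⟩ := Finset.mem_sdiff.mp (hmem i)
    refine G.isWitnessSet_pair_of_notMem hw hT hVC.1 ((hmatch _ hVCi).1.vcEdge_of_notMem hTi)
      (hmatch _ hVCi).2 fun e heVC heT hlt => ?_
    obtain ⟨j, rfl⟩ := hsurj e (Finset.mem_sdiff.mpr ⟨heVC, heT⟩)
    have hji : j < i := Monotone.reflect_lt (f := G.L ∘ f') (fun a b hab => hord a b hab) hlt
    exact hb j (by omega)

/-- witness pairs from a minimum vertex cover and matching:
in a prediction mandatory free instance with unique `T_L = T_U`, given a minimum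
vertex cover `VC` of the vertex cover instance and a matching `h` assigning to
each `e ∈ VC` a distinct partner `h e ∉ VC`, for the edges of `VC ∩ T_L` ordered
by non-increasing upper limit, if the true value of each of the first `d` edges
is minimal in its cut, then `{l'_i, h(l'_i)}` is a witness set for all `i ≤ d`;
symmetrically for the edges of `VC ∖ T_L` ordered by non-decreasing lower limit
that are maximal on their cycles. -/
theorem vc_matching_witness_sets
    (G : UncGraph) (w : G.E → ℝ) (hw : G.Valid w)
    (hPMF : G.PredMandatoryFree)
    (T : Finset G.E) (hT : G.UniqueLimitTrees T)
    (VC : Finset G.E) (hVC : G.IsMinVC T VC)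
    (h : G.E → G.E)
    (hmatch : ∀ e ∈ VC, G.VCAdj T e (h e) ∧ h e ∉ VC)
    (hinj : Set.InjOn h ↑VC) :
    (∀ (k : ℕ) (l' : Fin k → G.E), Function.Injective l' →
      (∀ i, l' i ∈ VC ∩ T) → (∀ e ∈ VC ∩ T, ∃ i, l' i = e) →
      (∀ i j : Fin k, i ≤ j → G.U (l' j) ≤ G.U (l' i)) →
      ∀ d : ℕ,
        (∀ i : Fin k, (i : ℕ) < d →
          ∀ e', G.InCut T (l' i) e' → e' ≠ l' i → w (l' i) ≤ G.L e') →
        ∀ i : Fin k, (i : ℕ) ≤ d → G.IsWitnessSet w {l' i, h (l' i)}) ∧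
    (∀ (g : ℕ) (f' : Fin g → G.E), Function.Injective f' →
      (∀ i, f' i ∈ VC \ T) → (∀ e ∈ VC \ T, ∃ i, f' i = e) →
      (∀ i j : Fin g, i ≤ j → G.L (f' i) ≤ G.L (f' j)) →
      ∀ b : ℕ,
        (∀ i : Fin g, (i : ℕ) < b →
          ∀ C, G.IsCycleOf T (f' i) C → ∀ e ∈ C, e ≠ f' i → G.U e ≤ w (f' i)) →
        ∀ i : Fin g, (i : ℕ) ≤ b → G.IsWitnessSet w {f' i, h (f' i)}) :=
  vc_matching_witness_sets_general G w hw T hT VC hVC h hmatch
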